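/- arXiv:0706.0624 — 3 statements merged into one kernel-verified Lean document; each statement's English description precedes it below -/
import Mathlib

section
/- Let X, Y, Z be real normed linear spaces, A ⊆ X a convex set, and B ⊆ Y an open set. Let F : A → B and G : B → Z be locally d.c. mappings. Then G ∘ F is locally d.c. on A. -/
open Set Metric Bornology Filter NNReal

/-- `f` is a control function for `F` on the convex set `C`. -/
def IsControlOn {X Y : Type*} [NormedAddCommGroup X] [NormedSpace ℝ X]
    [NormedAddCommGroup Y] [NormedSpace ℝ Y]
    (C : Set X) (F : X → Y) (f : X → ℝ) : Prop :=
  ContinuousOn f C ∧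
    ∀ φ : Y →L[ℝ] ℝ, ‖φ‖ ≤ 1 → ConvexOn ℝ C (fun x => φ (F x) + f x)

/-- `F` is a d.c. (delta-convex) mapping on `C`. -/
def IsDCOn {X Y : Type*} [NormedAddCommGroup X] [NormedSpace ℝ X]
    [NormedAddCommGroup Y] [NormedSpace ℝ Y]
    (C : Set X) (F : X → Y) : Prop :=
  ContinuousOn F C ∧ ∃ f : X → ℝ, IsControlOn C F f

/-- `g` is a d.c. function on `C`: a difference of two continuous convex functions. -/
def IsDCFnOn {X : Type*} [NormedAddCommGroup X] [NormedSpace ℝ X]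
    (C : Set X) (g : X → ℝ) : Prop :=
  ∃ p q : X → ℝ, ContinuousOn p C ∧ ContinuousOn q C ∧
    ConvexOn ℝ C p ∧ ConvexOn ℝ C q ∧ ∀ x ∈ C, g x = p x - q x

/-- `A ⊂⊂ B`: some ε-enlargement of `A` is contained in `B`. -/
def SubSub {X : Type*} [NormedAddCommGroup X] (A B : Set X) : Prop :=
  ∃ ε > (0:ℝ), ∀ a ∈ A, ∀ y : X, ‖y‖ < ε → a + y ∈ B

/-- `N` is an equivalent norm on `Y` with modulus of convexity of power type 2. -/
def IsEquivNormPT2 {Y : Type*} [NormedAddCommGroup Y] [NormedSpace ℝ Y] (N : Y → ℝ) : Prop :=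
  (∀ u v : Y, N (u + v) ≤ N u + N v) ∧
  (∀ (a : ℝ) (u : Y), N (a • u) = |a| * N u) ∧
  (∃ c₁ c₂ : ℝ, 0 < c₁ ∧ 0 < c₂ ∧ ∀ u : Y, c₁ * ‖u‖ ≤ N u ∧ N u ≤ c₂ * ‖u‖) ∧
  (∃ a : ℝ, 0 < a ∧ ∀ ε : ℝ, ε ∈ Set.Ioc (0:ℝ) 2 → ∀ u v : Y,
    N u ≤ 1 → N v ≤ 1 → ε ≤ N (u - v) → a * ε ^ 2 ≤ 1 - N ((2⁻¹ : ℝ) • (u + v)))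

/-- `G` is `C^{1,1}` on `U`: Fréchet differentiable with Lipschitz derivative. -/
def IsC11On {X Y : Type*} [NormedAddCommGroup X] [NormedSpace ℝ X]
    [NormedAddCommGroup Y] [NormedSpace ℝ Y] (U : Set X) (G : X → Y) : Prop :=
  ∃ G' : X → X →L[ℝ] Y, (∀ x ∈ U, HasFDerivAt G (G' x) x) ∧
    ∃ L : NNReal, LipschitzOnWith L G' U

/-- `F` is locally d.c. on `C`: each point of `C` has a convex neighborhood `U`
with `F` d.c. on `U ∩ C`. -/
def LocallyDCOn {X Y : Type*} [NormedAddCommGroup X] [NormedSpace ℝ X]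
    [NormedAddCommGroup Y] [NormedSpace ℝ Y] (C : Set X) (F : X → Y) : Prop :=
  ∀ a ∈ C, ∃ U : Set X, U ∈ nhds a ∧ Convex ℝ U ∧ IsDCOn (U ∩ C) F

/-! The control function `f` of `F` measures how far `F` is from being affine:
`‖F (p • x + q • y) - (p • F x + q • F y)‖ ≤ p f x + q f y - f (p • x + q • y)`.
Near `F a` the convex functions `φ ∘ G + g`, `‖φ‖ ≤ 1`, are uniformly bounded, hence uniformly
`L`-Lipschitz, so this defect is transported through `G` at the cost of the factor `L`,
and `g ∘ F + L • f` controls `G ∘ F`. -/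

open scoped Topology

section ControlFunction

variable {X Y Z : Type*} [NormedAddCommGroup X] [NormedSpace ℝ X]
  [NormedAddCommGroup Y] [NormedSpace ℝ Y] [NormedAddCommGroup Z] [NormedSpace ℝ Z]
  {C : Set X} {F : X → Y} {f : X → ℝ}

theorem IsControlOn.convexOn (hf : IsControlOn C F f) : ConvexOn ℝ C f := by
  simpa using hf.2 0 (by simp)

theorem IsControlOn.mono {C' : Set X} (hf : IsControlOn C F f) (hC' : C' ⊆ C)
    (hC'conv : Convex ℝ C') : IsControlOn C' F f :=
  ⟨hf.1.mono hC', fun φ hφ => (hf.2 φ hφ).subset hC' hC'conv⟩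

theorem IsControlOn.norm_map_convexCombo_sub_le (hf : IsControlOn C F f) {x y : X}
    (hx : x ∈ C) (hy : y ∈ C) {p q : ℝ} (hp : 0 ≤ p) (hq : 0 ≤ q) (hpq : p + q = 1) :
    ‖F (p • x + q • y) - (p • F x + q • F y)‖ ≤ p * f x + q * f y - f (p • x + q • y) := by
  obtain ⟨ψ, hψ, hψF⟩ := exists_dual_vector'' ℝ (F (p • x + q • y) - (p • F x + q • F y))
  have hconv := (hf.2 ψ hψ).2 hx hy hp hq hpq
  simp only [map_sub, map_add, map_smul, smul_eq_mul, RCLike.ofReal_real_eq_id, id] at hψF hconv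
  linarith

theorem IsControlOn.exists_forall_lipschitzOnWith_ball {G : Y → Z} {g : Y → ℝ} {S : Set Y}
    {b : Y} (hS : S ∈ 𝓝 b) (hG : ContinuousOn G S) (hg : IsControlOn S G g) :
    ∃ r > 0, ball b r ⊆ S ∧ ∃ L : ℝ≥0, ∀ φ : Z →L[ℝ] ℝ, ‖φ‖ ≤ 1 →
      LipschitzOnWith L (fun y => φ (G y) + g y) (ball b r) := by
  set M := ‖G b‖ + |g b| + 1
  have hcont : ContinuousAt (fun y => ‖G y‖ + |g y|) b :=
    (hG.continuousAt hS).norm.add (hg.1.continuousAt hS).abs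
  obtain ⟨r, hr, hrS⟩ := Metric.mem_nhds_iff.1 <|
    inter_mem hS (hcont.eventually_lt continuousAt_const (lt_add_one _))
  refine ⟨r / 2, half_pos hr, (ball_subset_ball (by linarith)).trans fun y hy => (hrS hy).1,
    (2 * M / (r / 2)).toNNReal, fun φ hφ => ?_⟩
  have hbound (y : Y) (hy : dist y b < r) : |φ (G y) + g y| ≤ M := by
    have hφy : |φ (G y)| ≤ ‖G y‖ := by simpa using φ.le_of_opNorm_le hφ (G y)
    have hyM : ‖G y‖ + |g y| < M := (hrS hy).2
    linarith [abs_add_le (φ (G y)) (g y)]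
  have hconv := (hg.2 φ hφ).subset (fun y hy => (hrS hy).1) (convex_ball b r)
  simpa only [sub_half] using hconv.lipschitzOnWith_of_abs_le (half_pos hr) hbound

theorem IsControlOn.comp {D : Set Y} {G : Y → Z} {g : Y → ℝ} {L : ℝ≥0}
    (hf : IsControlOn C F f) (hF : ContinuousOn F C) (hFD : MapsTo F C D)
    (hg : IsControlOn D G g)
    (hlip : ∀ φ : Z →L[ℝ] ℝ, ‖φ‖ ≤ 1 → LipschitzOnWith L (fun y => φ (G y) + g y) D) :
    IsControlOn C (G ∘ F) (fun x => g (F x) + L * f x) := by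
  refine ⟨(hg.1.comp hF hFD).add (continuousOn_const.mul hf.1), fun φ hφ =>
    ⟨hf.convexOn.1, fun x hx y hy p q hp hq hpq => ?_⟩⟩
  set P := p • F x + q • F y
  have hP : P ∈ D := hg.convexOn.1 (hFD hx) (hFD hy) hp hq hpq
  have hFz : F (p • x + q • y) ∈ D := hFD (hf.convexOn.1 hx hy hp hq hpq)
  have hdefect := hf.norm_map_convexCombo_sub_le hx hy hp hq hpq
  have hstep : φ (G (F (p • x + q • y))) + g (F (p • x + q • y)) - (φ (G P) + g P)
      ≤ L * ‖F (p • x + q • y) - P‖ := by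
    have := (hlip φ hφ).dist_le_mul _ hFz _ hP
    rw [Real.dist_eq, dist_eq_norm] at this
    exact (le_abs_self _).trans this
  have hconvP : φ (G P) + g P ≤ p * (φ (G (F x)) + g (F x)) + q * (φ (G (F y)) + g (F y)) := by
    simpa only [smul_eq_mul] using (hg.2 φ hφ).2 (hFD hx) (hFD hy) hp hq hpq
  have hscaled := mul_le_mul_of_nonneg_left hdefect L.coe_nonneg
  simp only [Function.comp_apply, smul_eq_mul]
  linear_combination hstep + hconvP + hscaled

end ControlFunction

/-- the composition of locally d.c. mappings (the outer one defined on
an open set) is locally d.c. -/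
theorem locallyDC_comp {X Y Z : Type*}
    [NormedAddCommGroup X] [NormedSpace ℝ X]
    [NormedAddCommGroup Y] [NormedSpace ℝ Y]
    [NormedAddCommGroup Z] [NormedSpace ℝ Z]
    (A : Set X) (hAconv : Convex ℝ A) (B : Set Y) (hBopen : IsOpen B)
    (F : X → Y) (hFmaps : Set.MapsTo F A B) (hF : LocallyDCOn A F)
    (G : Y → Z) (hG : ∀ b ∈ B, ∃ U : Set Y, U ∈ nhds b ∧ Convex ℝ U ∧ IsDCOn (U ∩ B) G) :
    LocallyDCOn A (G ∘ F) := by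
  intro a ha
  obtain ⟨U, hU, -, hFc, f, hf : IsControlOn _ F f⟩ := hF a ha
  obtain ⟨V, hV, -, hGc, g, hg : IsControlOn _ G g⟩ := hG (F a) (hFmaps ha)
  obtain ⟨r, hr, hrVB, L, hlip⟩ :=
    hg.exists_forall_lipschitzOnWith_ball (inter_mem hV (hBopen.mem_nhds (hFmaps ha))) hGc
  have hUA : U ∈ 𝓝[A] a := mem_nhdsWithin_of_mem_nhds hU
  have hpre : F ⁻¹' ball (F a) r ∈ 𝓝[A] a := by
    rw [← nhdsWithin_inter_of_mem hUA]
    exact hFc a ⟨mem_of_mem_nhds hU, ha⟩ (ball_mem_nhds _ hr)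
  obtain ⟨δ, hδ, hδsub⟩ := Metric.mem_nhdsWithin_iff.1 (inter_mem hUA hpre)
  have hWU : ball a δ ∩ A ⊆ U ∩ A := fun x hx => ⟨(hδsub hx).1, hx.2⟩
  have hWF : MapsTo F (ball a δ ∩ A) (ball (F a) r) := fun x hx => (hδsub hx).2
  have hFc' := hFc.mono hWU
  refine ⟨ball a δ, ball_mem_nhds a hδ, convex_ball a δ, hGc.comp hFc' (hWF.mono_right hrVB),
    _, (hf.mono hWU ((convex_ball a δ).inter hAconv)).comp hFc' hWF ?_ hlip⟩
  exact hg.mono hrVB (convex_ball _ _)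
end

section
/- Let X, Y, V, Z be real normed linear spaces, C ⊆ X an open convex set, F : C → Y and G : C → V d.c. mappings, and B : Y × V → Z a continuous bilinear mapping. If both Y and V admit equivalent norms with modulus of convexity of power type 2, then the mapping x ↦ B(F(x), G(x)) is d.c. on C. -/
open Set Metric Bornology Filter NNReal

/-!
A continuous map `H` is d.c. with control `h` as soon as `‖midpoint (H x) (H y) - H (midpoint x y)‖`
is bounded by the midpoint defect `(h x + h y) / 2 - h (midpoint x y)` of a continuous `h`, because
continuous midpoint convex functions are convex. For `H = B (F, G)` and `m = midpoint x y` the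
defect of `H` is `B (e_F, midpoint (G x) (G y)) + B (F m, e_G) + B (F x - F y, G x - G y) / 4`,
where the defects `e_F`, `e_G` of `F`, `G` are bounded by the defects of their controls `f`, `g`.
After subtracting affine minorants, `f, g ≥ 0`; since `‖G‖ + g` is convex, the defect of
`(f + ‖G‖ + g)²` dominates the first term, and symmetrically for the second. For the third,
power type 2 makes `N²` uniformly convex, so `‖F x - F y‖²` is dominated by the defect of
`N (F ·)²` up to an error `N (F m)² - N (midpoint (F x) (F y))²` of the first kind.
-/

section MidpointConvex

variable {X : Type*} [NormedAddCommGroup X] [NormedSpace ℝ X]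

lemma nonpos_of_midpoint_le_of_continuousOn {g : ℝ → ℝ} (hg : ContinuousOn g (Icc 0 1))
    (h0 : g 0 ≤ 0) (h1 : g 1 ≤ 0)
    (hmid : ∀ s ∈ Icc (0 : ℝ) 1, ∀ t ∈ Icc (0 : ℝ) 1, g ((s + t) / 2) ≤ (g s + g t) / 2) :
    ∀ t ∈ Icc (0 : ℝ) 1, g t ≤ 0 := by
  obtain ⟨t₀, ht₀, hmax⟩ := isCompact_Icc.exists_isMaxOn (nonempty_Icc.2 zero_le_one) hg
  suffices g t₀ ≤ 0 from fun t ht => (hmax ht).trans this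
  obtain ⟨h₀, h₁⟩ := ht₀
  rcases le_total t₀ (1 / 2) with ht | ht
  · have hle : g (2 * t₀) ≤ g t₀ := hmax ⟨by linarith, by linarith⟩
    have hmid₀ := hmid 0 ⟨le_rfl, zero_le_one⟩ (2 * t₀) ⟨by linarith, by linarith⟩
    rw [show (0 + 2 * t₀) / 2 = t₀ by ring] at hmid₀
    linarith
  · have hle : g (2 * t₀ - 1) ≤ g t₀ := hmax ⟨by linarith, by linarith⟩
    have hmid₁ := hmid (2 * t₀ - 1) ⟨by linarith, by linarith⟩ 1 ⟨zero_le_one, le_rfl⟩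
    rw [show (2 * t₀ - 1 + 1) / 2 = t₀ by ring] at hmid₁
    linarith

lemma convexOn_of_midpoint_le {C : Set X} {f : X → ℝ} (hC : Convex ℝ C) (hf : ContinuousOn f C)
    (hmid : ∀ x ∈ C, ∀ y ∈ C, f (midpoint ℝ x y) ≤ (f x + f y) / 2) : ConvexOn ℝ C f := by
  refine ⟨hC, fun x hx y hy a b ha hb hab => ?_⟩
  set g : ℝ → ℝ := fun t => f (x + t • (y - x)) - (f x + t * (f y - f x))
  have hseg : ∀ t ∈ Icc (0 : ℝ) 1, x + t • (y - x) ∈ C := fun t ht => hC.add_smul_sub_mem hx hy ht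
  have hg : ContinuousOn g (Icc 0 1) :=
    (hf.comp (by fun_prop) hseg).sub (by fun_prop)
  have hgmid : ∀ s ∈ Icc (0 : ℝ) 1, ∀ t ∈ Icc (0 : ℝ) 1, g ((s + t) / 2) ≤ (g s + g t) / 2 := by
    intro s hs t ht
    have key := hmid _ (hseg s hs) _ (hseg t ht)
    rw [midpoint_eq_smul_add, invOf_eq_inv,
      show (2⁻¹ : ℝ) • (x + s • (y - x) + (x + t • (y - x))) = x + ((s + t) / 2) • (y - x) by
        module] at key
    simp only [g]
    linarith
  have hgb := nonpos_of_midpoint_le_of_continuousOn hg (by simp [g]) (by simp [g]) hgmid b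
    ⟨hb, by linarith⟩
  obtain rfl : a = 1 - b := by linarith
  simp only [g, smul_eq_mul] at hgb ⊢
  rw [show (1 - b) • x + b • y = x + b • (y - x) by module]
  linarith

end MidpointConvex

section AffineMinorant

variable {X : Type*} [NormedAddCommGroup X] [NormedSpace ℝ X]

/-- Separate `(x₀, f x₀)` from the open strict epigraph of `f` by a functional `Φ` on `X × ℝ`;
then `Φ (0, 1) < 0` and the level set of `Φ` through `(x₀, f x₀)` is the graph of a minorant. -/
lemma ConvexOn.exists_affine_le {C : Set X} {f : X → ℝ} (hCo : IsOpen C) (hf : ConvexOn ℝ C f)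
    (hfc : ContinuousOn f C) : ∃ (ℓ : X →L[ℝ] ℝ) (c : ℝ), ∀ x ∈ C, ℓ x + c ≤ f x := by
  rcases C.eq_empty_or_nonempty with rfl | ⟨x₀, hx₀⟩
  · exact ⟨0, 0, fun x hx => hx.elim⟩
  set S : Set (X × ℝ) := {p | p.1 ∈ C ∧ f p.1 < p.2}
  have hSo : IsOpen S := by
    have hg : ContinuousOn (fun p : X × ℝ => f p.1 - p.2) (C ×ˢ univ) :=
      (hfc.comp continuous_fst.continuousOn fun p hp => hp.1).sub continuous_snd.continuousOn
    convert hg.isOpen_inter_preimage (hCo.prod isOpen_univ) isOpen_Iio (t := Iio 0) using 1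
    ext p
    simp [S, sub_neg]
  obtain ⟨Φ, hΦ⟩ := geometric_hahn_banach_open_point hf.convex_strict_epigraph hSo
    (x := (x₀, f x₀)) fun h => lt_irrefl _ h.2
  set β := Φ (0, 1)
  have hΦ_apply : ∀ x t, Φ (x, t) = Φ (x, 0) + t * β := fun x t => by
    rw [← smul_eq_mul, ← map_smul, ← map_add]; simp
  set K := Φ (x₀, f x₀)
  have hK : K = Φ (x₀, 0) + f x₀ * β := hΦ_apply _ _
  have hβ : β < 0 := by
    have := hΦ (x₀, f x₀ + 1) ⟨hx₀, by linarith⟩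
    rw [hΦ_apply] at this
    linarith
  have hsupp : ∀ x ∈ C, Φ (x, 0) + f x * β ≤ K := fun x hx =>
    le_of_forall_pos_lt_add fun ε hε => by
      have := hΦ (x, f x - ε / β) ⟨hx, by linarith [div_neg_of_pos_of_neg hε hβ]⟩
      rwa [hΦ_apply, sub_mul, div_mul_cancel₀ ε hβ.ne, ← add_sub_assoc, sub_lt_iff_lt_add] at this
  refine ⟨-β⁻¹ • Φ.comp (.inl ℝ X ℝ), β⁻¹ * K, fun x hx => ?_⟩
  calc (-β⁻¹ • Φ.comp (.inl ℝ X ℝ)) x + β⁻¹ * K = (K - Φ (x, 0)) / β := by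
        simp only [smul_apply, ContinuousLinearMap.comp_apply, ContinuousLinearMap.inl_apply,
          smul_eq_mul]
        ring
    _ ≤ f x := (div_le_iff_of_neg hβ).2 (by linarith [hsupp x hx])

end AffineMinorant

section UniformConvexity

variable {Y : Type*} [NormedAddCommGroup Y] [NormedSpace ℝ Y]

/-- `δ_p(ε) ≥ a ε²` for the modulus of convexity `δ_p` of `p`. -/
def Seminorm.HasModulusSqGE (p : Seminorm ℝ Y) (a : ℝ) : Prop :=
  ∀ ε : ℝ, ε ∈ Ioc (0 : ℝ) 2 → ∀ u v : Y,
    p u ≤ 1 → p v ≤ 1 → ε ≤ p (u - v) → a * ε ^ 2 ≤ 1 - p ((2⁻¹ : ℝ) • (u + v))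

lemma sq_add_min_mul_sq_le {a r₁ r₂ m m' ε ε' : ℝ} (ha : 0 < a) (hr₂ : 0 < r₂) (hr : r₂ ≤ r₁)
    (hm : 0 ≤ m) (hm' : 0 ≤ m') (hε : 0 ≤ ε) (hεε' : ε ≤ ε' + (r₁ - r₂))
    (hmod : a * ε' ^ 2 ≤ r₂ ^ 2 - r₂ * m') (hmm' : m ≤ m' + (r₁ - r₂) / 2) :
    m ^ 2 + min (1 / 64) (a / 2) * ε ^ 2 ≤ (r₁ ^ 2 + r₂ ^ 2) / 2 := by
  have hm'r : m' ≤ r₂ := by nlinarith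
  have hm'sq : m' ^ 2 ≤ r₂ ^ 2 - a * ε' ^ 2 := by nlinarith [mul_le_mul_of_nonneg_left hm'r hm']
  have hmsq : m ^ 2 ≤ (m' + (r₁ - r₂) / 2) ^ 2 := pow_le_pow_left₀ hm hmm' 2
  have hε_sq : min (1 / 64) (a / 2) * ε ^ 2 ≤ a * ε' ^ 2 + (r₁ - r₂) ^ 2 / 4 := by
    rcases le_total ε (4 * (r₁ - r₂)) with h | h
    · have : ε ^ 2 ≤ 16 * (r₁ - r₂) ^ 2 := by nlinarith
      nlinarith [min_le_left (1 / 64 : ℝ) (a / 2), sq_nonneg ε, sq_nonneg ε']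
    · have : (3 / 4 * ε) ^ 2 ≤ ε' ^ 2 := pow_le_pow_left₀ (by positivity) (by linarith) 2
      nlinarith [min_le_right (1 / 64 : ℝ) (a / 2), sq_nonneg ε]
  nlinarith [mul_le_mul_of_nonneg_right hm'r (sub_nonneg.2 hr)]

namespace Seminorm

variable {p : Seminorm ℝ Y}

lemma apply_midpoint (p : Seminorm ℝ Y) (u v : Y) : p (midpoint ℝ u v) = p (u + v) / 2 := by
  rw [midpoint_eq_smul_add, invOf_eq_inv, map_smul_eq_mul, Real.norm_of_nonneg (by norm_num)]
  ring

lemma apply_midpoint_le (p : Seminorm ℝ Y) (u v : Y) :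
    p (midpoint ℝ u v) ≤ (p u + p v) / 2 := by
  rw [apply_midpoint]; linarith [map_add_le_add p u v]

lemma continuous_of_le_mul_norm {c : ℝ} (hp : ∀ u, p u ≤ c * ‖u‖) : Continuous p := by
  refine (LipschitzWith.of_dist_le_mul (K := c.toNNReal) fun u v => ?_).continuous
  rw [Real.dist_eq, dist_eq_norm]
  exact (abs_sub_map_le_sub p u v).trans ((hp _).trans
    (mul_le_mul_of_nonneg_right (Real.le_coe_toNNReal c) (norm_nonneg _)))

lemma sq_sub_sq_le_of_le_mul_norm {c : ℝ} (hp : ∀ u, p u ≤ c * ‖u‖) (u v : Y) :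
    p u ^ 2 - p v ^ 2 ≤ c ^ 2 * ((‖u‖ + ‖v‖) * ‖u - v‖) := by
  have habs : |p u - p v| ≤ c * ‖u - v‖ := (abs_sub_map_le_sub p u v).trans (hp _)
  have hsum : p u + p v ≤ c * (‖u‖ + ‖v‖) := by linarith [hp u, hp v]
  nlinarith [le_abs_self (p u - p v), apply_nonneg p u, apply_nonneg p v,
    mul_le_mul habs hsum (add_nonneg (apply_nonneg p u) (apply_nonneg p v))
      ((abs_nonneg _).trans habs)]

lemma HasModulusSqGE.mul_sq_le {a : ℝ} (hp : p.HasModulusSqGE a) {r : ℝ} (hr : 0 < r) {u v : Y}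
    (hu : p u ≤ r) (hv : p v ≤ r) : a * p (u - v) ^ 2 ≤ r ^ 2 - r * p (midpoint ℝ u v) := by
  have hmid : p (midpoint ℝ u v) ≤ r := by linarith [p.apply_midpoint_le u v]
  rcases (apply_nonneg p (u - v)).eq_or_lt with h0 | hpos
  · rw [← h0]; nlinarith
  have hscale : ∀ w : Y, p (r⁻¹ • w) = p w / r := fun w => by
    rw [map_smul_eq_mul, Real.norm_of_nonneg (inv_nonneg.2 hr.le), inv_mul_eq_div]
  have key := hp (p (u - v) / r)
    ⟨div_pos hpos hr, (div_le_iff₀ hr).2 (by linarith [map_sub_le_add p u v])⟩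
    (r⁻¹ • u) (r⁻¹ • v) (by rw [hscale, div_le_one hr]; exact hu)
    (by rw [hscale, div_le_one hr]; exact hv) (by rw [← smul_sub, hscale])
  rw [← smul_add, smul_comm, ← invOf_eq_inv (2 : ℝ), ← midpoint_eq_smul_add, hscale] at key
  have := mul_le_mul_of_nonneg_left key (sq_nonneg r)
  field_simp at this
  linarith

/-- When `p v ≤ p u`, the modulus is applied at scale `p v` to `v` and the rescaled vector
`(p v / p u) • u`. -/
lemma HasModulusSqGE.exists_sq_midpoint_add_le {a : ℝ} (hp : p.HasModulusSqGE a) (ha : 0 < a) :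
    ∃ c > 0, ∀ u v : Y, p (midpoint ℝ u v) ^ 2 + c * p (u - v) ^ 2 ≤ (p u ^ 2 + p v ^ 2) / 2 := by
  refine ⟨min (1 / 64) (a / 2), by positivity, ?_⟩
  suffices key : ∀ u v : Y, p v ≤ p u →
      p (midpoint ℝ u v) ^ 2 + min (1 / 64) (a / 2) * p (u - v) ^ 2 ≤ (p u ^ 2 + p v ^ 2) / 2 by
    intro u v
    rcases le_total (p v) (p u) with h | h
    · exact key u v h
    · rw [midpoint_comm, map_sub_rev, add_comm (p u ^ 2)]; exact key v u h
  intro u v huv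
  have hmid := p.apply_midpoint_le u v
  rcases (apply_nonneg p v).eq_or_lt with hv | hv
  · have hsub : p (u - v) ≤ p u := by linarith [map_sub_le_add p u v]
    rw [← hv] at hmid ⊢
    nlinarith [min_le_left (1 / 64 : ℝ) (a / 2), apply_nonneg p (midpoint ℝ u v),
      apply_nonneg p (u - v), pow_le_pow_left₀ (apply_nonneg p _) hsub 2]
  have hu : 0 < p u := hv.trans_le huv
  set u' := (p v / p u) • u
  have hu' : p u' = p v := by
    rw [map_smul_eq_mul, Real.norm_of_nonneg (by positivity), div_mul_cancel₀ _ hu.ne']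
  have hdiff : p (u - u') = p u - p v := by
    rw [show u - u' = (1 - p v / p u) • u by simp [u', sub_smul],
      map_smul_eq_mul, Real.norm_of_nonneg (by rw [sub_nonneg, div_le_one hu]; exact huv),
      sub_mul, div_mul_cancel₀ _ hu.ne', one_mul]
  have hεε' : p (u - v) ≤ p (u' - v) + (p u - p v) := by
    have := map_add_le_add p (u' - v) (u - u')
    rwa [hdiff, show u' - v + (u - u') = u - v by abel] at this
  have hmm' : p (midpoint ℝ u v) ≤ p (midpoint ℝ u' v) + (p u - p v) / 2 := by
    have := map_add_le_add p (u' + v) (u - u')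
    rw [hdiff, show u' + v + (u - u') = u + v by abel] at this
    rw [apply_midpoint, apply_midpoint]
    linarith
  exact sq_add_min_mul_sq_le ha hv huv (apply_nonneg p _) (apply_nonneg p _) (apply_nonneg p _)
    hεε' (hp.mul_sq_le hv hu'.le le_rfl) hmm'

end Seminorm

end UniformConvexity

section MidpointDefect

variable {X Y : Type*} [NormedAddCommGroup X] [NormedSpace ℝ X]
  [NormedAddCommGroup Y] [NormedSpace ℝ Y] {C : Set X}

lemma midpoint_eq_add_div_two (a b : ℝ) : midpoint ℝ a b = (a + b) / 2 := by
  rw [midpoint_eq_smul_add, smul_eq_mul, invOf_eq_inv]; ring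

noncomputable def midpointDefect (F : X → Y) (x y : X) : Y :=
  midpoint ℝ (F x) (F y) - F (midpoint ℝ x y)

lemma midpointDefect_real (φ : X → ℝ) (x y : X) :
    midpointDefect φ x y = (φ x + φ y) / 2 - φ (midpoint ℝ x y) := by
  rw [midpointDefect, midpoint_eq_add_div_two]

lemma ConvexOn.map_midpoint_le {φ : X → ℝ} (hφ : ConvexOn ℝ C φ) {x y : X} (hx : x ∈ C)
    (hy : y ∈ C) : φ (midpoint ℝ x y) ≤ (φ x + φ y) / 2 := by
  have := hφ.2 hx hy (by norm_num : (0 : ℝ) ≤ 2⁻¹) (by norm_num : (0 : ℝ) ≤ 2⁻¹) (by norm_num)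
  rw [midpoint_eq_smul_add, invOf_eq_inv, smul_add]
  simp only [smul_eq_mul] at this
  linarith

lemma ContinuousLinearMap.map_midpointDefect (ψ : Y →L[ℝ] ℝ) (F : X → Y) (x y : X) :
    ψ (midpointDefect F x y) = midpointDefect (fun z => ψ (F z)) x y := by
  simp only [midpointDefect, map_sub, midpoint_eq_smul_add, map_smul, map_add]

lemma norm_midpoint_le (u v : Y) : ‖midpoint ℝ u v‖ ≤ (‖u‖ + ‖v‖) / 2 :=
  (normSeminorm ℝ Y).apply_midpoint_le u v

namespace IsControlOn

variable {F : X → Y} {f : X → ℝ}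

lemma convexOn_s16 (hF : IsControlOn C F f) : ConvexOn ℝ C f := by
  simpa using hF.2 0 (by simp)

lemma convexOn_norm_add (hF : IsControlOn C F f) : ConvexOn ℝ C fun x => ‖F x‖ + f x := by
  refine ⟨hF.convexOn_s16.1, fun x hx y hy a b ha hb hab => ?_⟩
  obtain ⟨φ, hφ, hφz⟩ := exists_dual_vector'' ℝ (F (a • x + b • y))
  have hφle : ∀ u, φ u ≤ ‖u‖ := fun u =>
    (le_abs_self _).trans (φ.le_of_opNorm_le hφ u |>.trans_eq (one_mul _))
  have := (hF.2 φ hφ).2 hx hy ha hb hab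
  simp only [smul_eq_mul, hφz, RCLike.ofReal_real_eq_id, id] at this ⊢
  nlinarith [mul_le_mul_of_nonneg_left (hφle (F x)) ha, mul_le_mul_of_nonneg_left (hφle (F y)) hb]

lemma norm_midpointDefect_le (hF : IsControlOn C F f) {x y : X} (hx : x ∈ C) (hy : y ∈ C) :
    ‖midpointDefect F x y‖ ≤ midpointDefect f x y := by
  obtain ⟨φ, hφ, hφz⟩ := exists_dual_vector'' ℝ (midpointDefect F x y)
  have := (hF.2 (-φ) (by rwa [norm_neg])).map_midpoint_le hx hy
  have hφF := φ.map_midpointDefect F x y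
  rw [midpointDefect_real] at hφF ⊢
  simp only [neg_apply] at this
  simp only [RCLike.ofReal_real_eq_id, id] at hφz
  linarith

lemma sub_affine (hF : IsControlOn C F f) (ℓ : X →L[ℝ] ℝ) (c : ℝ) :
    IsControlOn C F fun x => f x - (ℓ x + c) := by
  refine ⟨hF.1.sub (by fun_prop), fun φ hφ => ?_⟩
  refine ((hF.2 φ hφ).sub ((ℓ.toLinearMap.concaveOn hF.convexOn_s16.1).add_const c)).congr
    fun x _ => ?_
  simp only [Pi.sub_apply, Pi.add_apply, ContinuousLinearMap.coe_coe]
  ring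

lemma exists_nonneg (hCo : IsOpen C) (hF : IsControlOn C F f) :
    ∃ f', IsControlOn C F f' ∧ ∀ x ∈ C, 0 ≤ f' x := by
  obtain ⟨ℓ, c, hℓ⟩ := hF.convexOn_s16.exists_affine_le hCo hF.1
  exact ⟨_, hF.sub_affine ℓ c, fun x hx => sub_nonneg.2 (hℓ x hx)⟩

end IsControlOn

lemma isControlOn_of_norm_midpointDefect_le {H : X → Y} {h : X → ℝ} (hC : Convex ℝ C)
    (hH : ContinuousOn H C) (hh : ContinuousOn h C)
    (hle : ∀ x ∈ C, ∀ y ∈ C, ‖midpointDefect H x y‖ ≤ midpointDefect h x y) :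
    IsControlOn C H h := by
  refine ⟨hh, fun ψ hψ => convexOn_of_midpoint_le hC ((ψ.continuous.comp_continuousOn hH).add hh)
    fun x hx y hy => ?_⟩
  have hψH := ψ.map_midpointDefect H x y
  have hψle : -ψ (midpointDefect H x y) ≤ ‖midpointDefect H x y‖ :=
    (neg_le_abs _).trans (ψ.le_of_opNorm_le hψ _ |>.trans_eq (one_mul _))
  have := hle x hx y hy
  rw [midpointDefect_real] at hψH this
  linarith

end MidpointDefect

section Domination

variable {X Y : Type*} [NormedAddCommGroup X] [NormedSpace ℝ X]
  [NormedAddCommGroup Y] [NormedSpace ℝ Y] {C : Set X}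

def MidpointDominated (C : Set X) (E : X → X → ℝ) : Prop :=
  ∃ k : X → ℝ, ContinuousOn k C ∧ ∀ x ∈ C, ∀ y ∈ C, E x y ≤ midpointDefect k x y

namespace MidpointDominated

variable {E E' : X → X → ℝ}

lemma of_continuousOn {k : X → ℝ} (hk : ContinuousOn k C) :
    MidpointDominated C (midpointDefect k) :=
  ⟨k, hk, fun _ _ _ _ => le_rfl⟩

lemma mono (h : MidpointDominated C E) (hle : ∀ x ∈ C, ∀ y ∈ C, E' x y ≤ E x y) :
    MidpointDominated C E' :=
  let ⟨k, hk, hE⟩ := h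
  ⟨k, hk, fun x hx y hy => (hle x hx y hy).trans (hE x hx y hy)⟩

lemma add (h : MidpointDominated C E) (h' : MidpointDominated C E') :
    MidpointDominated C fun x y => E x y + E' x y := by
  obtain ⟨k, hk, hE⟩ := h
  obtain ⟨k', hk', hE'⟩ := h'
  refine ⟨fun z => k z + k' z, hk.add hk', fun x hx y hy => ?_⟩
  have := hE x hx y hy
  have := hE' x hx y hy
  rw [midpointDefect_real] at *
  linarith

lemma const_mul (h : MidpointDominated C E) {K : ℝ} (hK : 0 ≤ K) :
    MidpointDominated C fun x y => K * E x y := by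
  obtain ⟨k, hk, hE⟩ := h
  refine ⟨fun z => K * k z, continuousOn_const.mul hk, fun x hx y hy => ?_⟩
  have := mul_le_mul_of_nonneg_left (hE x hx y hy) hK
  rw [midpointDefect_real] at *
  linarith

end MidpointDominated

lemma isDCOn_of_midpointDominated {H : X → Y} (hC : Convex ℝ C) (hH : ContinuousOn H C)
    (h : MidpointDominated C fun x y => ‖midpointDefect H x y‖) : IsDCOn C H :=
  let ⟨k, hk, hle⟩ := h
  ⟨hH, k, isControlOn_of_norm_midpointDefect_le hC hH hk hle⟩

namespace IsControlOn

variable {F : X → Y} {f : X → ℝ}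

/-- For convex `s = f + Q ≥ 0`, the midpoint defect of `s²` dominates the product of
`(s x + s y) / 2` and the midpoint defect of `s`, hence of `f`. -/
lemma midpointDominated_mul (hF : IsControlOn C F f) (hf0 : ∀ x ∈ C, 0 ≤ f x) {Q : X → ℝ}
    (hQ : ConvexOn ℝ C Q) (hQc : ContinuousOn Q C) (hQ0 : ∀ x ∈ C, 0 ≤ Q x) {w : X → X → ℝ}
    (hw : ∀ x ∈ C, ∀ y ∈ C, w x y ≤ (Q x + Q y) / 2) :
    MidpointDominated C fun x y => w x y * ‖midpointDefect F x y‖ := by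
  refine ⟨fun z => (f z + Q z) ^ 2, (hF.1.add hQc).pow 2, fun x hx y hy => ?_⟩
  have hm := hF.convexOn_s16.1.midpoint_mem hx hy
  have he := hF.norm_midpointDefect_le hx hy
  have hfm := hF.convexOn_s16.map_midpoint_le hx hy
  have hQm := hQ.map_midpoint_le hx hy
  rw [midpointDefect_real] at he ⊢
  have := hw x hx y hy
  have := hf0 x hx; have := hf0 y hy; have := hf0 _ hm
  have := hQ0 x hx; have := hQ0 y hy; have := hQ0 _ hm
  nlinarith [norm_nonneg (midpointDefect F x y), sq_nonneg (f x + Q x - f y - Q y)]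

end IsControlOn

end Domination

section Product

variable {X Y V Z : Type*} [NormedAddCommGroup X] [NormedSpace ℝ X]
  [NormedAddCommGroup Y] [NormedSpace ℝ Y] [NormedAddCommGroup V] [NormedSpace ℝ V]
  [NormedAddCommGroup Z] [NormedSpace ℝ Z] {C : Set X}

namespace IsControlOn

variable {F : X → Y} {f : X → ℝ} {G : X → V} {g : X → ℝ}

lemma midpointDominated_norm_midpoint_mul (hF : IsControlOn C F f) (hf0 : ∀ x ∈ C, 0 ≤ f x)
    (hG : IsControlOn C G g) (hGc : ContinuousOn G C) (hg0 : ∀ x ∈ C, 0 ≤ g x) :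
    MidpointDominated C fun x y => ‖midpoint ℝ (G x) (G y)‖ * ‖midpointDefect F x y‖ :=
  hF.midpointDominated_mul hf0 hG.convexOn_norm_add (hGc.norm.add hG.1)
    (fun x hx => add_nonneg (norm_nonneg _) (hg0 x hx)) fun x hx y hy => by
      linarith [norm_midpoint_le (G x) (G y), hg0 x hx, hg0 y hy]

lemma midpointDominated_norm_mul (hF : IsControlOn C F f) (hFc : ContinuousOn F C)
    (hf0 : ∀ x ∈ C, 0 ≤ f x) (hG : IsControlOn C G g) (hg0 : ∀ x ∈ C, 0 ≤ g x) :
    MidpointDominated C fun x y => ‖F (midpoint ℝ x y)‖ * ‖midpointDefect G x y‖ :=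
  hG.midpointDominated_mul hg0 hF.convexOn_norm_add (hFc.norm.add hF.1)
    (fun x hx => add_nonneg (norm_nonneg _) (hf0 x hx)) fun x hx y hy => by
      linarith [hF.convexOn_norm_add.map_midpoint_le hx hy,
        hf0 _ (hF.convexOn_s16.1.midpoint_mem hx hy)]

lemma midpointDominated_sq_norm_sub {p : Seminorm ℝ Y} {c c₁ c₂ : ℝ} (hc : 0 < c) (hc₁ : 0 < c₁)
    (hp : ∀ u v, p (midpoint ℝ u v) ^ 2 + c * p (u - v) ^ 2 ≤ (p u ^ 2 + p v ^ 2) / 2)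
    (hlow : ∀ u, c₁ * ‖u‖ ≤ p u) (hup : ∀ u, p u ≤ c₂ * ‖u‖)
    (hF : IsControlOn C F f) (hFc : ContinuousOn F C) (hf0 : ∀ x ∈ C, 0 ≤ f x) :
    MidpointDominated C fun x y => ‖F x - F y‖ ^ 2 := by
  have hsq := MidpointDominated.of_continuousOn (C := C) (k := fun z => p (F z) ^ 2)
    (((p.continuous_of_le_mul_norm hup).comp_continuousOn hFc).pow 2)
  have hmul := hF.midpointDominated_mul hf0 hF.convexOn_norm_add (hFc.norm.add hF.1)
    (fun x hx => add_nonneg (norm_nonneg _) (hf0 x hx))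
    (w := fun x y => (‖F (midpoint ℝ x y)‖ + ‖midpoint ℝ (F x) (F y)‖) / 2) fun x hx y hy => by
      linarith [hF.convexOn_norm_add.map_midpoint_le hx hy,
        hf0 _ (hF.convexOn_s16.1.midpoint_mem hx hy), norm_midpoint_le (F x) (F y), hf0 x hx, hf0 y hy]
  refine ((hsq.add (hmul.const_mul (by positivity : 0 ≤ 2 * c₂ ^ 2))).const_mul
    (by positivity : 0 ≤ (c * c₁ ^ 2)⁻¹)).mono fun x hx y hy => ?_
  have hdiff := p.sq_sub_sq_le_of_le_mul_norm hup (F (midpoint ℝ x y)) (midpoint ℝ (F x) (F y))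
  rw [norm_sub_rev] at hdiff
  have hlow' : c₁ ^ 2 * ‖F x - F y‖ ^ 2 ≤ p (F x - F y) ^ 2 := by
    rw [← mul_pow]; exact pow_le_pow_left₀ (by positivity) (hlow _) 2
  rw [le_inv_mul_iff₀ (by positivity), midpointDefect_real, midpointDefect]
  nlinarith [hp (F x) (F y)]

end IsControlOn

lemma IsEquivNormPT2.midpointDominated_sq_norm_sub {N : Y → ℝ} (hN : IsEquivNormPT2 N)
    {F : X → Y} {f : X → ℝ} (hF : IsControlOn C F f) (hFc : ContinuousOn F C)
    (hf0 : ∀ x ∈ C, 0 ≤ f x) : MidpointDominated C fun x y => ‖F x - F y‖ ^ 2 := by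
  obtain ⟨hadd, hsmul, ⟨c₁, c₂, hc₁, -, hbd⟩, a, ha, hmod⟩ := hN
  let p : Seminorm ℝ Y := .of N hadd fun t u => by rw [Real.norm_eq_abs]; exact hsmul t u
  obtain ⟨c, hc, hp⟩ := (show p.HasModulusSqGE a from hmod).exists_sq_midpoint_add_le ha
  exact hF.midpointDominated_sq_norm_sub hc hc₁ hp (fun u => (hbd u).1) (fun u => (hbd u).2) hFc
    hf0

lemma ContinuousLinearMap.norm_midpoint_apply_sub_le (B : Y →L[ℝ] V →L[ℝ] Z) (a b m : Y)
    (a' b' m' : V) :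
    ‖midpoint ℝ (B a a') (B b b') - B m m'‖ ≤ ‖B‖ * (‖midpoint ℝ a' b'‖ * ‖midpoint ℝ a b - m‖
      + ‖m‖ * ‖midpoint ℝ a' b' - m'‖ + 8⁻¹ * (‖a - b‖ ^ 2 + ‖a' - b'‖ ^ 2)) := by
  have hid : midpoint ℝ (B a a') (B b b') - B m m' = B (midpoint ℝ a b - m) (midpoint ℝ a' b')
      + B m (midpoint ℝ a' b' - m') + (4⁻¹ : ℝ) • B (a - b) (a' - b') := by
    simp only [midpoint_eq_smul_add, invOf_eq_inv, map_add, map_sub, map_smul, add_apply,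
      sub_apply, smul_apply]
    module
  have h₁ := B.le_opNorm₂ (midpoint ℝ a b - m) (midpoint ℝ a' b')
  have h₂ := B.le_opNorm₂ m (midpoint ℝ a' b' - m')
  have h₃ := B.le_opNorm₂ (a - b) (a' - b')
  have hamgm : ‖a - b‖ * ‖a' - b'‖ ≤ (‖a - b‖ ^ 2 + ‖a' - b'‖ ^ 2) / 2 := by
    nlinarith [sq_nonneg (‖a - b‖ - ‖a' - b'‖)]
  rw [hid]
  refine norm_add₃_le.trans ?_
  rw [norm_smul, Real.norm_of_nonneg (by norm_num)]
  nlinarith [mul_le_mul_of_nonneg_left hamgm (opNorm_nonneg B)]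

end Product

/-- a continuous bilinear "product" of two d.c. mappings is d.c.,
provided both intermediate spaces admit equivalent norms with modulus of convexity of
power type 2. -/
theorem dc_bilinear_product {X Y V Z : Type*}
    [NormedAddCommGroup X] [NormedSpace ℝ X]
    [NormedAddCommGroup Y] [NormedSpace ℝ Y]
    [NormedAddCommGroup V] [NormedSpace ℝ V]
    [NormedAddCommGroup Z] [NormedSpace ℝ Z]
    (C : Set X) (hCopen : IsOpen C) (hCconv : Convex ℝ C)
    (F : X → Y) (hF : IsDCOn C F) (G : X → V) (hG : IsDCOn C G)
    (B : Y →L[ℝ] V →L[ℝ] Z)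
    (hY : ∃ N : Y → ℝ, IsEquivNormPT2 N) (hV : ∃ N : V → ℝ, IsEquivNormPT2 N) :
    IsDCOn C (fun x => B (F x) (G x)) := by
  obtain ⟨hFc, f₀, hf₀⟩ := hF
  obtain ⟨hGc, g₀, hg₀⟩ := hG
  obtain ⟨f, hf, hf0⟩ := hf₀.exists_nonneg hCopen
  obtain ⟨g, hg, hg0⟩ := hg₀.exists_nonneg hCopen
  obtain ⟨N, hN⟩ := hY
  obtain ⟨M, hM⟩ := hV
  have hsq := ((hN.midpointDominated_sq_norm_sub hf hFc hf0).add
    (hM.midpointDominated_sq_norm_sub hg hGc hg0)).const_mul (by norm_num : (0 : ℝ) ≤ 8⁻¹)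
  have hdom := (((hf.midpointDominated_norm_midpoint_mul hf0 hg hGc hg0).add
    (hf.midpointDominated_norm_mul hFc hf0 hg hg0)).add hsq).const_mul (norm_nonneg B)
  exact isDCOn_of_midpointDominated hCconv (B.continuous₂.comp_continuousOn (hFc.prodMk hGc))
    (hdom.mono fun x _ y _ => B.norm_midpoint_apply_sub_le _ _ _ _ _ _)
end

section
/- Let X, Y be real normed linear spaces, A ⊆ X an open convex set with 0 ∈ A, and F : A → Y a mapping. Suppose there exist λ ∈ (0,1), a sequence of points x_n ∈ X, and radii δ_n > 0 such that: each closed ball B(x_n, δ_n) is contained in A, each x_n belongs to λ·A (i.e., x_n = λ z_n for some z_n ∈ A), δ_n → 0, and F is unbounded on each ball B(x_n, δ_n). Then F is not d.c. on A. -/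
open Set Metric Bornology Filter NNReal

set_option maxHeartbeats 1000000

/-- a mapping unbounded on a sequence of small balls whose centers stay
in `λ·A` is not d.c. on `A`. -/
theorem not_dc_of_unbounded_on_balls {X Y : Type*}
    [NormedAddCommGroup X] [NormedSpace ℝ X]
    [NormedAddCommGroup Y] [NormedSpace ℝ Y]
    (A : Set X) (hAopen : IsOpen A) (hAconv : Convex ℝ A) (h0A : (0:X) ∈ A)
    (F : X → Y) (lam : ℝ) (hlam : lam ∈ Set.Ioo (0:ℝ) 1)
    (x : ℕ → X) (δ : ℕ → ℝ) (hδpos : ∀ n, 0 < δ n)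
    (hball : ∀ n, Metric.closedBall (x n) (δ n) ⊆ A)
    (hcenter : ∀ n, ∃ z ∈ A, x n = lam • z)
    (hδ0 : Tendsto δ atTop (nhds 0))
    (hunb : ∀ n, ¬ IsBounded (F '' Metric.ball (x n) (δ n))) :
    ¬ IsDCOn A F := by
  rintro ⟨hFcont, f, hfcont, hfctl⟩
  have hlam0 : 0 < lam := hlam.1
  have hlam1 : lam < 1 := hlam.2
  have h1lam : 0 < 1 - lam := by linarith
  -- f is convex (take φ = 0)
  have hfconv : ConvexOn ℝ A f := by
    have h := hfctl 0 (by simp)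
    simpa using h
  -- continuity of f at 0 : get ε
  have hf0 : ContinuousAt f 0 := hfcont.continuousAt (hAopen.mem_nhds h0A)
  have hmem : {b : X | f b < f 0 + 1} ∩ A ∈ nhds (0:X) := by
    refine Filter.inter_mem ?_ (hAopen.mem_nhds h0A)
    exact hf0.preimage_mem_nhds (Iio_mem_nhds (by linarith : f 0 < f 0 + 1))
  obtain ⟨ε, hε0, hεsub⟩ := Metric.mem_nhds_iff.1 hmem
  -- choose n with δ n < (1-lam) * (ε/2)
  have hpos : (0:ℝ) < (1 - lam) * (ε / 2) := by positivity
  obtain ⟨n, hn⟩ := (hδ0.eventually (gt_mem_nhds hpos)).exists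
  obtain ⟨x₀, hx₀⟩ : ∃ v, v = x n := ⟨_, rfl⟩
  obtain ⟨δ₀, hδ₀⟩ : ∃ v, v = δ n := ⟨_, rfl⟩
  rw [← hδ₀] at hn
  have hδ₀pos : 0 < δ₀ := hδ₀ ▸ hδpos n
  obtain ⟨z, hzA, hz⟩ := hcenter n
  rw [← hx₀] at hz
  have hballA : Metric.closedBall x₀ δ₀ ⊆ A := by rw [hx₀, hδ₀]; exact hball n
  have hx₀A : x₀ ∈ A := hballA (Metric.mem_closedBall_self hδ₀pos.le)
  -- f bounded above on ball x₀ δ₀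
  obtain ⟨M₁, hM₁⟩ : ∃ v : ℝ, v = lam * f z + (1 - lam) * (f 0 + 1) := ⟨_, rfl⟩
  have hfub : ∀ u ∈ Metric.ball x₀ δ₀, f u ≤ M₁ := by
    intro u hu
    have hw : ‖u - x₀‖ < δ₀ := by
      rw [← dist_eq_norm]; exact Metric.mem_ball.1 hu
    obtain ⟨b, hb⟩ : ∃ v : X, v = (1 - lam)⁻¹ • (u - x₀) := ⟨_, rfl⟩
    have hbn : ‖b‖ < ε := by
      rw [hb, norm_smul, Real.norm_eq_abs, abs_of_pos (by positivity)]
      rw [inv_mul_lt_iff₀ h1lam]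
      calc ‖u - x₀‖ < δ₀ := hw
        _ < (1 - lam) * (ε / 2) := hn
        _ ≤ (1 - lam) * ε := by nlinarith
    have hbball : b ∈ Metric.ball (0:X) ε := by
      rw [Metric.mem_ball, dist_zero_right]; exact hbn
    have hbA : b ∈ A := (hεsub hbball).2
    have hbf : f b < f 0 + 1 := (hεsub hbball).1
    have hucomb : u = lam • z + (1 - lam) • b := by
      rw [hb, smul_smul, mul_inv_cancel₀ (ne_of_gt h1lam), one_smul, hz]
      abel
    have := hfconv.2 hzA hbA hlam0.le h1lam.le (by ring)
    rw [← hucomb] at this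
    calc f u ≤ lam * f z + (1 - lam) * f b := this
      _ ≤ M₁ := by rw [hM₁]; nlinarith
  -- continuity of F and f at x₀ : get s
  have hFc : ContinuousAt F x₀ := hFcont.continuousAt (hAopen.mem_nhds hx₀A)
  have hfc : ContinuousAt f x₀ := hfcont.continuousAt (hAopen.mem_nhds hx₀A)
  obtain ⟨s₁, hs₁0, hs₁⟩ := Metric.continuousAt_iff.1 hFc 1 one_pos
  obtain ⟨s₂, hs₂0, hs₂⟩ := Metric.continuousAt_iff.1 hfc 1 one_pos
  obtain ⟨s, hsdef⟩ : ∃ v : ℝ, v = min (min s₁ s₂) δ₀ := ⟨_, rfl⟩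
  have hs0 : 0 < s := by rw [hsdef]; positivity
  have hss₁ : s ≤ s₁ := by rw [hsdef]; exact le_trans (min_le_left _ _) (min_le_left _ _)
  have hss₂ : s ≤ s₂ := by rw [hsdef]; exact le_trans (min_le_left _ _) (min_le_right _ _)
  have hsδ : s ≤ δ₀ := by rw [hsdef]; exact min_le_right _ _
  obtain ⟨t, htdef⟩ : ∃ v : ℝ, v = s / (2 * δ₀) := ⟨_, rfl⟩
  have ht0 : 0 < t := by rw [htdef]; positivity
  have ht1 : t ≤ 1/2 := by
    rw [htdef, div_le_div_iff₀ (by positivity) (by norm_num)]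
    nlinarith
  have ht2 : t * δ₀ = s / 2 := by rw [htdef]; field_simp
  obtain ⟨C, hC⟩ : ∃ v : ℝ, v = 2*‖F x₀‖ + 2*|f x₀| + 2 + |M₁| := ⟨_, rfl⟩
  have hC0 : 0 < C := by rw [hC]; positivity
  -- main bound
  apply hunb n
  rw [isBounded_iff_forall_norm_le]
  refine ⟨C / t, ?_⟩
  rintro y ⟨u, hu, rfl⟩
  rw [← hx₀, ← hδ₀] at hu
  have huA : u ∈ A := hballA (Metric.ball_subset_closedBall hu)
  have hw : ‖u - x₀‖ < δ₀ := by rw [← dist_eq_norm]; exact Metric.mem_ball.1 hu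
  obtain ⟨p, hp⟩ : ∃ v : X, v = (1 - t) • x₀ + t • u := ⟨_, rfl⟩
  have hpx₀ : dist p x₀ < s := by
    have h1 : p - x₀ = t • (u - x₀) := by rw [hp]; module
    rw [dist_eq_norm, h1, norm_smul, Real.norm_eq_abs, abs_of_pos ht0]
    calc t * ‖u - x₀‖ < t * δ₀ := mul_lt_mul_of_pos_left hw ht0
      _ = s / 2 := ht2
      _ < s := by linarith
  have hFp : ‖F p‖ ≤ ‖F x₀‖ + 1 := by
    have h3 := hs₁ (lt_of_lt_of_le hpx₀ hss₁)
    rw [dist_eq_norm] at h3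
    have h2 := norm_sub_norm_le (F p) (F x₀)
    linarith
  have hfp : |f p - f x₀| ≤ 1 := by
    have h3 := hs₂ (lt_of_lt_of_le hpx₀ hss₂)
    rw [Real.dist_eq] at h3; linarith
  have hfu : f u ≤ M₁ := hfub u hu
  -- per-functional bound
  have key : ∀ φ : Y →L[ℝ] ℝ, ‖φ‖ ≤ 1 → φ (F u) ≤ C / t := by
    intro φ hφ
    have hconv := (hfctl (-φ) (by rwa [norm_neg])).2 hx₀A huA (by linarith : (0:ℝ) ≤ 1 - t)
      ht0.le (by ring)
    rw [← hp] at hconv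
    simp only [ContinuousLinearMap.neg_apply, smul_eq_mul] at hconv
    -- hconv : -φ (F p) + f p ≤ (1-t) * (-φ (F x₀) + f x₀) + t * (-φ (F u) + f u)
    have hφp : |φ (F p)| ≤ ‖F p‖ := by
      have h := φ.le_opNorm (F p)
      rw [Real.norm_eq_abs] at h
      nlinarith [norm_nonneg (F p), abs_nonneg (φ (F p))]
    have hφx₀ : |φ (F x₀)| ≤ ‖F x₀‖ := by
      have h := φ.le_opNorm (F x₀)
      rw [Real.norm_eq_abs] at h
      nlinarith [norm_nonneg (F x₀), abs_nonneg (φ (F x₀))]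
    have h1 : t * φ (F u) ≤ φ (F p) - (1-t) * φ (F x₀) + (1-t) * f x₀ + t * f u - f p := by
      linarith [hconv]
    have habs1 := abs_le.1 hφp
    have habs2 := abs_le.1 hφx₀
    have habs3 := abs_le.1 hfp
    have h4 : t * f u ≤ |M₁| := by
      rcases le_or_gt (f u) 0 with h | h
      · nlinarith [abs_nonneg M₁]
      · nlinarith [le_abs_self M₁]
    have hB : -((1-t) * φ (F x₀)) ≤ ‖F x₀‖ := by
      nlinarith [habs2.1, habs2.2]
    have hD : (1-t) * f x₀ ≤ |f x₀| := by
      nlinarith [le_abs_self (f x₀), neg_abs_le (f x₀)]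
    have h2 : t * φ (F u) ≤ C := by
      rw [hC]
      linarith [h1, habs1.2, hFp, hB, hD, h4, habs3.1, le_abs_self (f x₀), neg_abs_le (f x₀)]
    rw [le_div_iff₀ ht0]
    linarith [h2]
  -- conclude ‖F u‖ ≤ C / t
  refine NormedSpace.norm_le_dual_bound ℝ (F u) (div_nonneg hC0.le ht0.le) ?_
  intro g
  rcases eq_or_ne g 0 with rfl | hg
  · simpa using mul_nonneg (div_nonneg hC0.le ht0.le) (norm_nonneg (0 : StrongDual ℝ Y))
  have hgn : (0:ℝ) < ‖g‖ := norm_pos_iff.2 hg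
  obtain ⟨ψ, hψ⟩ : ∃ v : Y →L[ℝ] ℝ, v = ‖g‖⁻¹ • g := ⟨_, rfl⟩
  have hψn : ‖ψ‖ ≤ 1 := by
    rw [hψ]
    have : ‖(‖g‖⁻¹ : ℝ) • g‖ = ‖g‖⁻¹ * ‖g‖ := by
      rw [norm_smul, norm_inv, norm_norm]
    rw [this, inv_mul_cancel₀ (ne_of_gt hgn)]
  have h1 := key ψ hψn
  have h2 := key (-ψ) (by rwa [norm_neg])
  simp only [ContinuousLinearMap.neg_apply] at h2
  have hψu : |ψ (F u)| ≤ C / t := abs_le.2 ⟨by linarith, h1⟩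
  have heq : ψ (F u) = ‖g‖⁻¹ * g (F u) := by rw [hψ]; simp
  rw [heq, abs_mul, abs_inv, abs_norm] at hψu
  rw [Real.norm_eq_abs]
  calc |g (F u)| = ‖g‖ * (‖g‖⁻¹ * |g (F u)|) := by field_simp
    _ ≤ ‖g‖ * (C / t) := by nlinarith
    _ = C / t * ‖g‖ := by ring
end
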